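/- Let g be holomorphic on a neighborhood of the closed unit disk with g(0) = 0, |g(e^{iθ})| = 1 for all θ, and suppose equality holds in the isoperimetric inequality: ∫_{B₁}|g'|² dA = π. Then g(z) = a z for some constant a with |a| = 1. -/

import Mathlib

/-!
Write `g = ∑ aₙ zⁿ`. Parseval's identity on the unit circle turns `|g| = 1` there into
`∑ |aₙ|² = 1`, and integrating Parseval's identity for `g'` over the circles of radius `r < 1`
(polar coordinates) gives `∫_{B₁} |g'|² = π ∑ n |aₙ|²`. So the hypothesis on the area says
`∑ (n - 1) |aₙ|² = 0`; as `a₀ = g 0 = 0`, all coefficients but `a₁` vanish and `|a₁| = 1`.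
-/

open MeasureTheory Complex Real

open Set Metric ComplexConjugate
open scoped Nat

theorem integral_exp_intCast_mul_mul_I (k : ℤ) :
    ∫ θ in Ioo (-π) π, exp (k * θ * I) = if k = 0 then (2 * π : ℂ) else 0 := by
  rw [← integral_Ioc_eq_integral_Ioo,
    ← intervalIntegral.integral_of_le (by linarith [pi_pos] : -π ≤ π)]
  split_ifs with hk
  · simp [hk, two_mul]
  · have hkI : (k : ℂ) * I ≠ 0 := by simpa using hk
    simp_rw [mul_right_comm _ _ I]
    rw [integral_exp_mul_complex hkI, div_eq_zero_iff, sub_eq_zero]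
    left
    rw [show (k : ℂ) * I * ((π : ℝ) : ℂ) = k * I * ((-π : ℝ) : ℂ) + k * (2 * π * I) by
      push_cast; ring, Complex.exp_add, exp_int_mul_two_pi_mul_I, mul_one]

section Parseval

variable {c : ℕ → ℂ}

theorem norm_mul_exp_natCast_mul_I (a : ℂ) (n : ℕ) (θ : ℝ) : ‖a * exp (n * θ * I)‖ = ‖a‖ := by
  rw [norm_mul, ← ofReal_natCast, ← ofReal_mul, norm_exp_ofReal_mul_I, mul_one]

theorem continuous_tsum_mul_exp (hc : Summable fun n => ‖c n‖) :
    Continuous fun θ : ℝ => ∑' n, c n * exp (n * θ * I) :=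
  continuous_tsum (fun n => by fun_prop) hc fun n θ => (norm_mul_exp_natCast_mul_I _ n θ).le

theorem integral_tsum_mul_exp_mul_exp_neg (hc : Summable fun n => ‖c n‖) (m : ℕ) :
    ∫ θ in Ioo (-π) π, (∑' n, c n * exp (n * θ * I)) * exp (-(m * θ * I)) = 2 * π * c m := by
  have hterm : ∀ (n : ℕ) (θ : ℝ), c n * exp (n * θ * I) * exp (-(m * θ * I))
      = c n * exp (((n - m : ℤ) : ℂ) * θ * I) := fun n θ => by
    rw [mul_assoc, ← Complex.exp_add]; push_cast; ring_nf
  simp_rw [← tsum_mul_right, hterm]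
  rw [← integral_tsum_of_summable_integral_norm]
  · simp_rw [integral_const_mul, integral_exp_intCast_mul_mul_I, sub_eq_zero, Nat.cast_inj,
      mul_ite, mul_zero]
    rw [tsum_ite_eq m]
    ring
  · exact fun n => (Continuous.integrableOn_Icc (by fun_prop)).mono_set Ioo_subset_Icc_self
  · simp_rw [norm_mul, ← ofReal_intCast, ← ofReal_mul, norm_exp_ofReal_mul_I, mul_one,
      integral_const, smul_eq_mul]
    exact hc.mul_left _

theorem hasSum_integral_norm_tsum_mul_exp_sq (hc : Summable fun n => ‖c n‖) :
    HasSum (fun n => 2 * π * ‖c n‖ ^ 2)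
      (∫ θ in Ioo (-π) π, ‖∑' n, c n * exp (n * θ * I)‖ ^ 2) := by
  set F : ℝ → ℂ := fun θ => ∑' n, c n * exp (n * θ * I)
  have hF : Continuous F := continuous_tsum_mul_exp hc
  have hconj : ∀ θ : ℝ, ((‖F θ‖ ^ 2 : ℝ) : ℂ) = ∑' m, conj (c m * exp (m * θ * I)) * F θ :=
    fun θ => by rw [tsum_mul_right, ← conj_tsum, ofReal_pow, ← mul_conj', mul_comm]
  have hterm : ∀ (m : ℕ) (θ : ℝ),
      conj (c m * exp (m * θ * I)) * F θ = conj (c m) * (F θ * exp (-(m * θ * I))) :=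
    fun m θ => by
      rw [map_mul, ← exp_conj]
      simp only [map_mul, map_natCast, conj_ofReal, conj_I, mul_neg]
      ring
  have hsum : HasSum (fun m => ∫ θ in Ioo (-π) π, conj (c m * exp (m * θ * I)) * F θ)
      (∫ θ in Ioo (-π) π, ∑' m, conj (c m * exp (m * θ * I)) * F θ) := by
    refine hasSum_integral_of_summable_integral_norm
      (fun m => (Continuous.integrableOn_Icc (by fun_prop)).mono_set Ioo_subset_Icc_self) ?_
    simp_rw [norm_mul, RCLike.norm_conj, norm_mul_exp_natCast_mul_I, integral_const_mul]
    exact hc.mul_right _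
  simp_rw [← hconj, integral_complex_ofReal, hterm, integral_const_mul] at hsum
  simp only [F, integral_tsum_mul_exp_mul_exp_neg hc] at hsum
  rw [← hasSum_ofReal]
  convert hsum using 2 with m
  push_cast
  rw [← conj_mul']
  ring

end Parseval

noncomputable def taylorCoeff (f : ℂ → ℂ) (n : ℕ) : ℂ := (n ! : ℂ)⁻¹ * iteratedDeriv n f 0

section TaylorCoeff

variable {f : ℂ → ℂ} {R : ℝ}

@[simp]
theorem taylorCoeff_zero (f : ℂ → ℂ) : taylorCoeff f 0 = f 0 := by
  simp [taylorCoeff]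

theorem taylorCoeff_deriv (f : ℂ → ℂ) (n : ℕ) :
    taylorCoeff (deriv f) n = (n + 1) * taylorCoeff f (n + 1) := by
  rw [taylorCoeff, taylorCoeff, ← iteratedDeriv_succ', Nat.factorial_succ]
  push_cast
  field_simp

theorem hasSum_taylorCoeff_mul_pow (hf : DifferentiableOn ℂ f (ball 0 R)) {z : ℂ}
    (hz : z ∈ ball 0 R) : HasSum (fun n => taylorCoeff f n * z ^ n) (f z) := by
  simpa [taylorCoeff, mul_comm, mul_left_comm] using hasSum_taylorSeries_on_ball hf hz

theorem summable_norm_taylorCoeff_mul_pow (hf : DifferentiableOn ℂ f (ball 0 R)) {z : ℂ}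
    (hz : ‖z‖ < R) : Summable fun n => ‖taylorCoeff f n * z ^ n‖ := by
  obtain ⟨s, hzs, hsR⟩ := exists_between hz
  have hs : (s : ℂ) ∈ ball 0 R := by
    rwa [mem_ball_zero_iff, norm_real, norm_of_nonneg ((norm_nonneg z).trans hzs.le)]
  refine summable_norm_iff.mpr (summable_powerSeries_of_norm_lt (w := (s : ℂ)) ?_ ?_)
  · exact (hasSum_taylorCoeff_mul_pow hf hs).tendsto_sum_nat.cauchySeq
  · rwa [norm_real, norm_of_nonneg ((norm_nonneg z).trans hzs.le)]

theorem norm_ofReal_mul_exp_mul_I {r : ℝ} (hr : 0 ≤ r) (θ : ℝ) : ‖(r : ℂ) * exp (θ * I)‖ = r := by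
  rw [norm_mul, norm_exp_ofReal_mul_I, mul_one, norm_real, norm_of_nonneg hr]

theorem hasSum_integral_norm_sq_circle (hf : DifferentiableOn ℂ f (ball 0 R)) {r : ℝ}
    (hr : 0 ≤ r) (hrR : r < R) :
    HasSum (fun n => 2 * π * ‖taylorCoeff f n‖ ^ 2 * r ^ (2 * n))
      (∫ θ in Ioo (-π) π, ‖f (r * exp (θ * I))‖ ^ 2) := by
  have hseries : ∀ θ : ℝ,
      f (r * exp (θ * I)) = ∑' n, taylorCoeff f n * r ^ n * exp (n * θ * I) := fun θ => by
    have hz : (r : ℂ) * exp (θ * I) ∈ ball 0 R := by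
      rwa [mem_ball_zero_iff, norm_ofReal_mul_exp_mul_I hr]
    rw [← (hasSum_taylorCoeff_mul_pow hf hz).tsum_eq]
    congr 1 with n
    rw [mul_pow, ← Complex.exp_nat_mul]
    ring_nf
  have hc : Summable fun n => ‖taylorCoeff f n * r ^ n‖ :=
    summable_norm_taylorCoeff_mul_pow hf (by rwa [norm_real, norm_of_nonneg hr])
  simp_rw [hseries]
  convert hasSum_integral_norm_tsum_mul_exp_sq hc using 2 with n
  rw [norm_mul, norm_pow, norm_real, norm_of_nonneg hr]
  ring

end TaylorCoeff

section Area

theorem polarCoord_symm_eq_mul_exp (p : ℝ × ℝ) :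
    Complex.polarCoord.symm p = p.1 * exp (p.2 * I) := by
  rw [Complex.polarCoord_symm_apply, exp_mul_I, ← ofReal_cos, ← ofReal_sin]

theorem integral_ball_eq_integral_polar {E : Type*} [NormedAddCommGroup E] [NormedSpace ℝ E]
    {f : ℂ → E} {ρ : ℝ} (hf : ContinuousOn f (closedBall 0 ρ)) :
    ∫ z in ball 0 ρ, f z = ∫ r in Ioo 0 ρ, ∫ θ in Ioo (-π) π, r • f (r * exp (θ * I)) := by
  set e : ℝ × ℝ → ℂ := fun p => p.1 * exp (p.2 * I)
  have he : Continuous e := by fun_prop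
  have hnorm : ∀ p : ℝ × ℝ, ‖e p‖ = |p.1| := fun p => by
    rw [show e p = Complex.polarCoord.symm p from (polarCoord_symm_eq_mul_exp p).symm,
      norm_polarCoord_symm]
  have hpolar : Complex.polarCoord.target ∩ e ⁻¹' ball 0 ρ = Ioo 0 ρ ×ˢ Ioo (-π) π := by
    ext ⟨r, θ⟩
    simp only [Complex.polarCoord_target, mem_inter_iff, mem_prod, mem_Ioi, mem_preimage,
      mem_ball_zero_iff, hnorm, mem_Ioo]
    constructor
    · rintro ⟨⟨hr, hθ⟩, hrρ⟩
      exact ⟨⟨hr, by rwa [abs_of_pos hr] at hrρ⟩, hθ⟩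
    · rintro ⟨⟨hr, hrρ⟩, hθ⟩
      exact ⟨⟨hr, hθ⟩, by rwa [abs_of_pos hr]⟩
  have hint : IntegrableOn (fun p : ℝ × ℝ => p.1 • f (e p)) (Icc 0 ρ ×ˢ Icc (-π) π) := by
    refine ContinuousOn.integrableOn_compact (isCompact_Icc.prod isCompact_Icc) ?_
    refine continuous_fst.continuousOn.smul (hf.comp he.continuousOn ?_)
    rintro ⟨r, θ⟩ ⟨⟨hr, hrρ⟩, -⟩
    rwa [mem_closedBall_zero_iff, hnorm, abs_of_nonneg hr]
  calc ∫ z in ball 0 ρ, f z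
      = ∫ p in Complex.polarCoord.target,
          (e ⁻¹' ball 0 ρ).indicator (fun p => p.1 • f (e p)) p := by
        rw [← integral_indicator measurableSet_ball, ← Complex.integral_comp_polarCoord_symm]
        congr 1 with p
        rw [polarCoord_symm_eq_mul_exp]
        by_cases hp : e p ∈ ball 0 ρ
        · rw [indicator_of_mem hp, indicator_of_mem (mem_preimage.mpr hp)]
        · rw [indicator_of_notMem hp, indicator_of_notMem (mt mem_preimage.mp hp), smul_zero]
    _ = ∫ p in Ioo 0 ρ ×ˢ Ioo (-π) π, p.1 • f (e p) := by
        rw [setIntegral_indicator (measurableSet_ball.preimage he.measurable), hpolar]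
    _ = ∫ r in Ioo 0 ρ, ∫ θ in Ioo (-π) π, r • f (r * exp (θ * I)) := by
        rw [Measure.volume_eq_prod, setIntegral_prod _
          (hint.mono_set (prod_mono Ioo_subset_Icc_self Ioo_subset_Icc_self))]

variable {f : ℂ → ℂ} {R : ℝ}

theorem hasSum_integral_norm_sq_ball (hf : DifferentiableOn ℂ f (ball 0 R)) {ρ : ℝ}
    (hρ : 0 ≤ ρ) (hρR : ρ < R) :
    HasSum (fun n => π * ‖taylorCoeff f n‖ ^ 2 * ρ ^ (2 * n + 2) / (n + 1))
      (∫ z in ball 0 ρ, ‖f z‖ ^ 2) := by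
  set F : ℕ → ℝ → ℝ := fun n r => 2 * π * ‖taylorCoeff f n‖ ^ 2 * r ^ (2 * n + 1)
  have hF : ∀ n, ∫ r in Ioo 0 ρ, F n r = π * ‖taylorCoeff f n‖ ^ 2 * ρ ^ (2 * n + 2) / (n + 1) :=
    fun n => by
      rw [integral_const_mul, ← integral_Ioc_eq_integral_Ioo,
        ← intervalIntegral.integral_of_le hρ, integral_pow]
      push_cast
      field_simp
      ring
  have hcircle : ∀ r ∈ Ioo 0 ρ, r * ∫ θ in Ioo (-π) π, ‖f (r * exp (θ * I))‖ ^ 2 = ∑' n, F n r :=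
    fun r hr => by
      rw [← (hasSum_integral_norm_sq_circle hf hr.1.le (hr.2.trans hρR)).tsum_eq, ← tsum_mul_left]
      congr 1 with n
      ring
  have hsum : HasSum (fun n => ∫ r in Ioo 0 ρ, F n r) (∫ r in Ioo 0 ρ, ∑' n, F n r) := by
    refine hasSum_integral_of_summable_integral_norm
      (fun n => (Continuous.integrableOn_Icc (by fun_prop)).mono_set Ioo_subset_Icc_self) ?_
    have hnorm : ∀ n, ∫ r in Ioo 0 ρ, ‖F n r‖ = ∫ r in Ioo 0 ρ, F n r := fun n =>
      setIntegral_congr_fun measurableSet_Ioo fun r hr => norm_of_nonneg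
        (mul_nonneg (by positivity) (pow_nonneg hr.1.le _))
    simp_rw [hnorm, hF]
    have := (hasSum_integral_norm_sq_circle hf hρ hρR).summable.mul_left (ρ ^ 2 / 2)
    refine this.of_nonneg_of_le (fun n => by positivity) fun n => ?_
    calc π * ‖taylorCoeff f n‖ ^ 2 * ρ ^ (2 * n + 2) / (n + 1)
        ≤ π * ‖taylorCoeff f n‖ ^ 2 * ρ ^ (2 * n + 2) :=
          div_le_self (by positivity) (le_add_of_nonneg_left n.cast_nonneg)
      _ = ρ ^ 2 / 2 * (2 * π * ‖taylorCoeff f n‖ ^ 2 * ρ ^ (2 * n)) := by ring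
  rw [integral_ball_eq_integral_polar (f := fun z => ‖f z‖ ^ 2)
    ((hf.continuousOn.mono (closedBall_subset_ball hρR)).norm.pow 2)]
  simp_rw [smul_eq_mul, integral_const_mul]
  rw [setIntegral_congr_fun measurableSet_Ioo hcircle]
  simpa only [hF] using hsum

theorem hasSum_integral_norm_deriv_sq_ball (hf : DifferentiableOn ℂ f (ball 0 R)) {ρ : ℝ}
    (hρ : 0 ≤ ρ) (hρR : ρ < R) :
    HasSum (fun n => π * ((n + 1) * ‖taylorCoeff f (n + 1)‖ ^ 2) * ρ ^ (2 * n + 2))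
      (∫ z in ball 0 ρ, ‖deriv f z‖ ^ 2) := by
  have hterm : ∀ n : ℕ, π * ‖taylorCoeff (deriv f) n‖ ^ 2 * ρ ^ (2 * n + 2) / (n + 1)
      = π * ((n + 1) * ‖taylorCoeff f (n + 1)‖ ^ 2) * ρ ^ (2 * n + 2) := fun n => by
    rw [taylorCoeff_deriv, norm_mul, mul_pow, ← ofReal_natCast, ← ofReal_one, ← ofReal_add,
      norm_real, norm_of_nonneg (by positivity)]
    field_simp
  simpa only [hterm] using hasSum_integral_norm_sq_ball (hf.deriv isOpen_ball) hρ hρR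

end Area

theorem eq_zero_of_hasSum_of_hasSum_natCast_add_one_mul {x : ℕ → ℝ} (hx : ∀ n, 0 ≤ x n) {s : ℝ}
    (h : HasSum x s) (h' : HasSum (fun n => (n + 1) * x n) s) {n : ℕ} (hn : n ≠ 0) : x n = 0 := by
  have hdiff : HasSum (fun n => n * x n) 0 := by
    simpa [add_mul] using h'.sub h
  have := (hasSum_zero_iff_of_nonneg fun n => mul_nonneg n.cast_nonneg (hx n)).mp hdiff
  simpa [hn] using congrFun this n

/-- Equality case in the isoperimetric inequality: a holomorphic map of the closed disk
fixing `0`, sending the unit circle into itself, and with area integral `π`, is a rotation. -/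
theorem rotation_of_equality (g : ℂ → ℂ) (U : Set ℂ) (hU : IsOpen U)
    (hUB : Metric.closedBall (0 : ℂ) 1 ⊆ U) (hg : DifferentiableOn ℂ g U)
    (hg0 : g 0 = 0)
    (hcirc : ∀ θ : ℝ, ‖g (Complex.exp (θ * Complex.I))‖ = 1)
    (harea : (∫ z in Metric.ball (0 : ℂ) 1, ‖deriv g z‖ ^ 2) = π) :
    ∃ a : ℂ, ‖a‖ = 1 ∧ ∀ z ∈ Metric.ball (0 : ℂ) 1, g z = a * z := by
  obtain ⟨δ, hδ, hδU⟩ := (isCompact_closedBall (0 : ℂ) 1).exists_thickening_subset_open hU hUB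
  rw [thickening_closedBall hδ zero_le_one] at hδU
  have hgR : DifferentiableOn ℂ g (ball 0 (δ + 1)) := hg.mono hδU
  have hR : (1 : ℝ) < δ + 1 := by linarith
  set a := taylorCoeff g
  have hcoeff : HasSum (fun n => ‖a n‖ ^ 2) 1 := by
    have h := hasSum_integral_norm_sq_circle hgR zero_le_one hR
    simp only [ofReal_one, one_mul, hcirc, one_pow, setIntegral_const, smul_eq_mul, mul_one,
      volume_real_Ioo_of_le (neg_le_self pi_pos.le)] at h
    refine (hasSum_mul_left_iff (a₂ := 2 * π) (by positivity)).mp ?_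
    simpa only [sub_neg_eq_add, ← two_mul, mul_one] using h
  have hderiv : HasSum (fun n => (n + 1) * ‖a (n + 1)‖ ^ 2) 1 := by
    have h := hasSum_integral_norm_deriv_sq_ball hgR zero_le_one hR
    rw [harea] at h
    refine (hasSum_mul_left_iff pi_ne_zero).mp ?_
    simpa only [one_pow, mul_one] using h
  have hshift : HasSum (fun n => ‖a (n + 1)‖ ^ 2) 1 := by
    simpa [a, hg0] using (hasSum_nat_add_iff' 1).mpr hcoeff
  have hvanish : ∀ n ≠ 0, a (n + 1) = 0 := fun n hn => by
    simpa using eq_zero_of_hasSum_of_hasSum_natCast_add_one_mul (fun n => sq_nonneg _) hshift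
      hderiv hn
  have ha1 : ‖a 1‖ = 1 := by
    have h := hshift.unique (hasSum_single 0 fun n hn => by simp [hvanish n hn])
    exact (pow_eq_one_iff_of_nonneg (norm_nonneg _) two_ne_zero).mp (by simpa using h.symm)
  refine ⟨a 1, ha1, fun z hz => ?_⟩
  refine (hasSum_taylorCoeff_mul_pow hgR (ball_subset_ball hR.le hz)).unique
    (hasSum_single 1 fun n hn => ?_) |>.trans (by simp [a])
  rcases n with _ | n
  · simp [hg0]
  · exact mul_eq_zero_of_left (hvanish n (by omega)) _
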